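/- Assume conditions (α) and (β) hold and that S*(A,H,C,G_y) ⊆ V*(A,B,E,D_z). Let S be an (A,H,C,G_y)-input containing subspace with V_m ∩ S_M ⊆ S ⊆ S_M. Then for every (A,B,E,D_z)-output nulling friend F of S + V_m and every (A,H,C,G_y)-input containing friend G of V_m ∩ S_M: the subspace V_m is (A+BF)-invariant, the subspace S is (A+GC)-invariant, and σ(A+BF | (S+V_m)/V_m) = σ(A+GC | S/(V_m ∩ S_M)) as multisets of complex numbers. -/

import Mathlib

noncomputable section

open Matrix Submodule

section GeneralDefs

variable {X U Y : Type*} [AddCommGroup X] [Module ℝ X] [AddCommGroup U] [Module ℝ U]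
  [AddCommGroup Y] [Module ℝ Y]

/-- `V` is an `(A,B,C,D)`-output nulling subspace. -/
def IsOutputNulling (A : X →ₗ[ℝ] X) (B : U →ₗ[ℝ] X) (C : X →ₗ[ℝ] Y) (D : U →ₗ[ℝ] Y)
    (V : Submodule ℝ X) : Prop :=
  ∀ v ∈ V, ∃ u : U, A v + B u ∈ V ∧ C v + D u = 0

/-- `S` is an `(A,B,C,D)`-input containing subspace. -/
def IsInputContaining (A : X →ₗ[ℝ] X) (B : U →ₗ[ℝ] X) (C : X →ₗ[ℝ] Y) (D : U →ₗ[ℝ] Y)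
    (S : Submodule ℝ X) : Prop :=
  ∀ x ∈ S, ∀ u : U, C x + D u = 0 → A x + B u ∈ S

/-- `Vstar` is the largest `(A,B,C,D)`-output nulling subspace, i.e. `V*(A,B,C,D)`. -/
def IsMaxOutputNulling (A : X →ₗ[ℝ] X) (B : U →ₗ[ℝ] X) (C : X →ₗ[ℝ] Y) (D : U →ₗ[ℝ] Y)
    (Vstar : Submodule ℝ X) : Prop :=
  IsOutputNulling A B C D Vstar ∧ ∀ V, IsOutputNulling A B C D V → V ≤ Vstar

/-- `Sstar` is the smallest `(A,B,C,D)`-input containing subspace, i.e. `S*(A,B,C,D)`. -/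
def IsMinInputContaining (A : X →ₗ[ℝ] X) (B : U →ₗ[ℝ] X) (C : X →ₗ[ℝ] Y) (D : U →ₗ[ℝ] Y)
    (Sstar : Submodule ℝ X) : Prop :=
  IsInputContaining A B C D Sstar ∧ ∀ S, IsInputContaining A B C D S → Sstar ≤ S

/-- `V` is `(A,B,C,D)`-self bounded, where `Vstar` is the largest output nulling subspace:
`V` is output nulling and `V ⊇ V* ∩ B(ker D)`. -/
def IsSelfBounded (A : X →ₗ[ℝ] X) (B : U →ₗ[ℝ] X) (C : X →ₗ[ℝ] Y) (D : U →ₗ[ℝ] Y)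
    (Vstar V : Submodule ℝ X) : Prop :=
  IsOutputNulling A B C D V ∧ Vstar ⊓ (LinearMap.ker D).map B ≤ V

/-- `S` is `(A,B,C,D)`-self hidden, where `Sstar` is the smallest input containing subspace:
`S` is input containing and `S ⊆ S* + C⁻¹(im D)`. -/
def IsSelfHidden (A : X →ₗ[ℝ] X) (B : U →ₗ[ℝ] X) (C : X →ₗ[ℝ] Y) (D : U →ₗ[ℝ] Y)
    (Sstar S : Submodule ℝ X) : Prop :=
  IsInputContaining A B C D S ∧ S ≤ Sstar ⊔ (LinearMap.range D).comap C

/-- `Vm` is the smallest `(A,B,C,D)`-self bounded subspace. -/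
def IsMinSelfBounded (A : X →ₗ[ℝ] X) (B : U →ₗ[ℝ] X) (C : X →ₗ[ℝ] Y) (D : U →ₗ[ℝ] Y)
    (Vstar Vm : Submodule ℝ X) : Prop :=
  IsSelfBounded A B C D Vstar Vm ∧ ∀ V, IsSelfBounded A B C D Vstar V → Vm ≤ V

/-- `SM` is the largest `(A,B,C,D)`-self hidden subspace. -/
def IsMaxSelfHidden (A : X →ₗ[ℝ] X) (B : U →ₗ[ℝ] X) (C : X →ₗ[ℝ] Y) (D : U →ₗ[ℝ] Y)
    (Sstar SM : Submodule ℝ X) : Prop :=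
  IsSelfHidden A B C D Sstar SM ∧ ∀ S, IsSelfHidden A B C D Sstar S → S ≤ SM

end GeneralDefs

section MatrixDefs

variable {n m q p r s : ℕ}

/-- `⟨M|U⟩` : the smallest `M`-invariant subspace containing `U`. -/
def invHull (M : Matrix (Fin n) (Fin n) ℝ) (U : Submodule ℝ (Fin n → ℝ)) :
    Submodule ℝ (Fin n → ℝ) :=
  sInf {W | U ≤ W ∧ ∀ x ∈ W, M.mulVec x ∈ W}

/-- `⟨U|M⟩` : the largest `M`-invariant subspace contained in `U`. -/
def invCore (M : Matrix (Fin n) (Fin n) ℝ) (U : Submodule ℝ (Fin n → ℝ)) :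
    Submodule ℝ (Fin n → ℝ) :=
  sSup {W | W ≤ U ∧ ∀ x ∈ W, M.mulVec x ∈ W}

open scoped Classical in
/-- `σ(M | J₂/J₁)`: the multiset of complex roots (with multiplicity) of the characteristic
polynomial of the map induced by `M` on the quotient `J₂ ⧸ J₁`, for `M`-invariant `J₁ ≤ J₂`. -/
def quotSpec (M : Matrix (Fin n) (Fin n) ℝ)
    (J₁ J₂ : Submodule ℝ (Fin n → ℝ)) : Multiset ℂ :=
  if h : J₁ ≤ J₂ ∧ (∀ x ∈ J₁, M.mulVec x ∈ J₁) ∧ (∀ x ∈ J₂, M.mulVec x ∈ J₂) then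
    (((Submodule.mapQ (J₁.comap J₂.subtype) (J₁.comap J₂.subtype)
        (M.mulVecLin.restrict (p := J₂) (q := J₂) (fun x hx => h.2.2 x hx))
        (fun x hx => h.2.1 x.1 hx)).charpoly).map (algebraMap ℝ ℂ)).roots
  else 0

/-- `σ(M)`: the multiset of complex roots (with multiplicity) of the characteristic
polynomial of the square matrix `M`. -/
def specMat {ι : Type*} [Fintype ι] [DecidableEq ι] (M : Matrix ι ι ℝ) : Multiset ℂ :=
  ((M.charpoly).map (algebraMap ℝ ℂ)).roots

/-- Condition (α). -/
def CondAlpha (B : Matrix (Fin n) (Fin m) ℝ) (H : Matrix (Fin n) (Fin q) ℝ)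
    (Dz : Matrix (Fin r) (Fin m) ℝ) (Gz : Matrix (Fin r) (Fin q) ℝ)
    (V : Submodule ℝ (Fin n → ℝ)) : Prop :=
  ∀ w : Fin q → ℝ, ∃ u : Fin m → ℝ,
    H.mulVec w + B.mulVec u ∈ V ∧ Gz.mulVec w + Dz.mulVec u = 0

/-- Condition (β). -/
def CondBeta (C : Matrix (Fin p) (Fin n) ℝ) (Gy : Matrix (Fin p) (Fin q) ℝ)
    (E : Matrix (Fin r) (Fin n) ℝ) (Gz : Matrix (Fin r) (Fin q) ℝ)
    (S : Submodule ℝ (Fin n → ℝ)) : Prop :=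
  ∀ x ∈ S, ∀ w : Fin q → ℝ, C.mulVec x + Gy.mulVec w = 0 → E.mulVec x + Gz.mulVec w = 0

/-- `(S,V;K)` is a solution triple of DDPDOF. -/
def IsSolutionTriple (A : Matrix (Fin n) (Fin n) ℝ) (B : Matrix (Fin n) (Fin m) ℝ)
    (H : Matrix (Fin n) (Fin q) ℝ) (C : Matrix (Fin p) (Fin n) ℝ)
    (Dy : Matrix (Fin p) (Fin m) ℝ) (Gy : Matrix (Fin p) (Fin q) ℝ)
    (E : Matrix (Fin r) (Fin n) ℝ) (Dz : Matrix (Fin r) (Fin m) ℝ)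
    (Gz : Matrix (Fin r) (Fin q) ℝ)
    (S V : Submodule ℝ (Fin n → ℝ)) (K : Matrix (Fin m) (Fin p) ℝ) : Prop :=
  IsInputContaining A.mulVecLin H.mulVecLin C.mulVecLin Gy.mulVecLin S ∧
  IsOutputNulling A.mulVecLin B.mulVecLin E.mulVecLin Dz.mulVecLin V ∧
  CondAlpha B H Dz Gz V ∧
  CondBeta C Gy E Gz S ∧
  S ≤ V ∧
  IsUnit (1 + K * Dy) ∧
  ∀ x ∈ S, ∀ w : Fin q → ℝ,
    (A + B * K * C).mulVec x + (H + B * K * Gy).mulVec w ∈ V ∧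
    (E + Dz * K * C).mulVec x + (Gz + Dz * K * Gy).mulVec w = 0

/-- `F` is an `(A,B,E,Dz)`-output nulling friend of `V`. -/
def IsONFriend (A : Matrix (Fin n) (Fin n) ℝ) (B : Matrix (Fin n) (Fin m) ℝ)
    (E : Matrix (Fin r) (Fin n) ℝ) (Dz : Matrix (Fin r) (Fin m) ℝ)
    (V : Submodule ℝ (Fin n → ℝ)) (F : Matrix (Fin m) (Fin n) ℝ) : Prop :=
  (∀ v ∈ V, (A + B * F).mulVec v ∈ V) ∧ ∀ v ∈ V, (E + Dz * F).mulVec v = 0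

/-- `G` is an `(A,H,C,Gy)`-input containing friend of `S`. -/
def IsICFriend (A : Matrix (Fin n) (Fin n) ℝ) (H : Matrix (Fin n) (Fin q) ℝ)
    (C : Matrix (Fin p) (Fin n) ℝ) (Gy : Matrix (Fin p) (Fin q) ℝ)
    (S : Submodule ℝ (Fin n → ℝ)) (G : Matrix (Fin n) (Fin p) ℝ) : Prop :=
  (∀ x ∈ S, (A + G * C).mulVec x ∈ S) ∧ LinearMap.range (H + G * Gy).mulVecLin ≤ S

/-- `σfix(V;F)`. -/
def sigmaFixV (A : Matrix (Fin n) (Fin n) ℝ) (B : Matrix (Fin n) (Fin m) ℝ)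
    (Dz : Matrix (Fin r) (Fin m) ℝ) (V : Submodule ℝ (Fin n → ℝ))
    (F : Matrix (Fin m) (Fin n) ℝ) : Multiset ℂ :=
  quotSpec (A + B * F) (V ⊔ invHull A (LinearMap.range B.mulVecLin)) ⊤ +
  quotSpec (A + B * F)
    (invHull (A + B * F) (V ⊓ (LinearMap.ker Dz.mulVecLin).map B.mulVecLin)) V

/-- `σfix(S;G)`. -/
def sigmaFixS (A : Matrix (Fin n) (Fin n) ℝ) (C : Matrix (Fin p) (Fin n) ℝ)
    (Gy : Matrix (Fin p) (Fin q) ℝ) (S : Submodule ℝ (Fin n → ℝ))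
    (G : Matrix (Fin n) (Fin p) ℝ) : Multiset ℂ :=
  quotSpec (A + G * C) S
    (invCore (A + G * C) (S ⊔ (LinearMap.range Gy.mulVecLin).comap C.mulVecLin)) +
  quotSpec (A + G * C) ⊥ (S ⊓ invCore A (LinearMap.ker C.mulVecLin))

/-- `σfix(S,V;G,F) = σfix(V;F) ⊎ σfix(S;G)`. -/
def sigmaFix (A : Matrix (Fin n) (Fin n) ℝ) (B : Matrix (Fin n) (Fin m) ℝ)
    (C : Matrix (Fin p) (Fin n) ℝ) (Gy : Matrix (Fin p) (Fin q) ℝ)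
    (Dz : Matrix (Fin r) (Fin m) ℝ) (S V : Submodule ℝ (Fin n → ℝ))
    (G : Matrix (Fin n) (Fin p) ℝ) (F : Matrix (Fin m) (Fin n) ℝ) : Multiset ℂ :=
  sigmaFixV A B Dz V F + sigmaFixS A C Gy S G

/-- `W = (I - Dy·Dc)⁻¹`. -/
def clW (Dy : Matrix (Fin p) (Fin m) ℝ) (Dc : Matrix (Fin m) (Fin p) ℝ) :
    Matrix (Fin p) (Fin p) ℝ := (1 - Dy * Dc)⁻¹

/-- The closed-loop matrix `Â`. -/
def clA (A : Matrix (Fin n) (Fin n) ℝ) (B : Matrix (Fin n) (Fin m) ℝ)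
    (C : Matrix (Fin p) (Fin n) ℝ) (Dy : Matrix (Fin p) (Fin m) ℝ)
    (Ac : Matrix (Fin s) (Fin s) ℝ) (Bc : Matrix (Fin s) (Fin p) ℝ)
    (Cc : Matrix (Fin m) (Fin s) ℝ) (Dc : Matrix (Fin m) (Fin p) ℝ) :
    Matrix (Fin n ⊕ Fin s) (Fin n ⊕ Fin s) ℝ :=
  Matrix.fromBlocks (A + B * Dc * clW Dy Dc * C) (B * Cc + B * Dc * clW Dy Dc * Dy * Cc)
    (Bc * clW Dy Dc * C) (Ac + Bc * clW Dy Dc * Dy * Cc)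

/-- The closed-loop matrix `Ĥ`. -/
def clH (B : Matrix (Fin n) (Fin m) ℝ) (H : Matrix (Fin n) (Fin q) ℝ)
    (Dy : Matrix (Fin p) (Fin m) ℝ) (Gy : Matrix (Fin p) (Fin q) ℝ)
    (Bc : Matrix (Fin s) (Fin p) ℝ) (Dc : Matrix (Fin m) (Fin p) ℝ) :
    Matrix (Fin n ⊕ Fin s) (Fin q) ℝ :=
  Matrix.fromRows (H + B * Dc * clW Dy Dc * Gy) (Bc * clW Dy Dc * Gy)

/-- The closed-loop matrix `Ĉ`. -/
def clC (C : Matrix (Fin p) (Fin n) ℝ) (Dy : Matrix (Fin p) (Fin m) ℝ)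
    (E : Matrix (Fin r) (Fin n) ℝ) (Dz : Matrix (Fin r) (Fin m) ℝ)
    (Cc : Matrix (Fin m) (Fin s) ℝ) (Dc : Matrix (Fin m) (Fin p) ℝ) :
    Matrix (Fin r) (Fin n ⊕ Fin s) ℝ :=
  Matrix.fromCols (E + Dz * Dc * clW Dy Dc * C) (Dz * Cc + Dz * Dc * clW Dy Dc * Dy * Cc)

/-- The closed-loop matrix `Ĝ`. -/
def clG (Dy : Matrix (Fin p) (Fin m) ℝ) (Gy : Matrix (Fin p) (Fin q) ℝ)
    (Dz : Matrix (Fin r) (Fin m) ℝ) (Gz : Matrix (Fin r) (Fin q) ℝ)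
    (Dc : Matrix (Fin m) (Fin p) ℝ) : Matrix (Fin r) (Fin q) ℝ :=
  Gz + Dz * Dc * clW Dy Dc * Gy

/-- DDPDOF is solvable. -/
def DDPDOFSolvable (A : Matrix (Fin n) (Fin n) ℝ) (B : Matrix (Fin n) (Fin m) ℝ)
    (H : Matrix (Fin n) (Fin q) ℝ) (C : Matrix (Fin p) (Fin n) ℝ)
    (Dy : Matrix (Fin p) (Fin m) ℝ) (Gy : Matrix (Fin p) (Fin q) ℝ)
    (E : Matrix (Fin r) (Fin n) ℝ) (Dz : Matrix (Fin r) (Fin m) ℝ)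
    (Gz : Matrix (Fin r) (Fin q) ℝ) : Prop :=
  ∃ (s : ℕ) (Ac : Matrix (Fin s) (Fin s) ℝ) (Bc : Matrix (Fin s) (Fin p) ℝ)
    (Cc : Matrix (Fin m) (Fin s) ℝ) (Dc : Matrix (Fin m) (Fin p) ℝ),
    IsUnit (1 - Dy * Dc) ∧ clG Dy Gy Dz Gz Dc = 0 ∧
    ∀ k : ℕ, clC C Dy E Dz Cc Dc * clA A B C Dy Ac Bc Cc Dc ^ k * clH B H Dy Gy Bc Dc = 0

end MatrixDefs

end

/-!
Every `x ∈ S` splits as `s + c` with `s ∈ S*(A,H,[C;E],[Gy;Gz]) ⊆ Vm ∩ SM` and `c ∈ S` a state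
that some disturbance `w` hides from both outputs (`C c = Gy w`, `E c = Gz w`); the inclusion into
`Vm` holds because the self bounded `Vm` absorbs every admissible successor of its points.
On such a `c` the closed-loop maps differ by `(B F c + H w) - (H + G Gy) w`, and both terms
lie in `Vm`. So `A + BF` and `A + GC` agree on `S` modulo `Vm`, and the second
isomorphism theorem `S ⧸ (S ∩ Vm) ≃ (S + Vm) ⧸ Vm` conjugates the maps they induce.
-/

open Matrix Submodule

section LinearMaps

variable {X U W Y Z : Type*} [AddCommGroup X] [Module ℝ X] [AddCommGroup U] [Module ℝ U]
  [AddCommGroup W] [Module ℝ W] [AddCommGroup Y] [Module ℝ Y] [AddCommGroup Z] [Module ℝ Z]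

theorem IsOutputNulling.coprod {A : X →ₗ[ℝ] X} {B : U →ₗ[ℝ] X} {C : X →ₗ[ℝ] Y}
    {D : U →ₗ[ℝ] Y} {V : Submodule ℝ X} (h : IsOutputNulling A B C D V)
    (B' : W →ₗ[ℝ] X) (D' : W →ₗ[ℝ] Y) :
    IsOutputNulling A (B.coprod B') C (D.coprod D') V := fun v hv => by
  obtain ⟨u, hu, hCu⟩ := h v hv
  exact ⟨(u, 0), by simpa using hu, by simpa using hCu⟩

theorem IsInputContaining.prod {A : X →ₗ[ℝ] X} {B : U →ₗ[ℝ] X} {C : X →ₗ[ℝ] Y}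
    {D : U →ₗ[ℝ] Y} {S : Submodule ℝ X} (h : IsInputContaining A B C D S)
    (C' : X →ₗ[ℝ] Z) (D' : U →ₗ[ℝ] Z) :
    IsInputContaining A B (C.prod C') (D.prod D') S := fun x hx u hu =>
  h x hx u (by simpa using congrArg Prod.fst hu)

theorem comap_range_prod_le {C : X →ₗ[ℝ] Y} {C' : X →ₗ[ℝ] Z} {D : W →ₗ[ℝ] Y}
    {D' : W →ₗ[ℝ] Z} :
    (LinearMap.range (D.prod D')).comap (C.prod C') ≤ (LinearMap.range D).comap C := by
  rintro x ⟨w, hw⟩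
  exact ⟨w, by simpa using congrArg Prod.fst hw⟩

/-- Two admissible successors of `x` differ by an element of `V* ∩ B (ker D) ⊆ V`. -/
theorem IsSelfBounded.add_mem {A : X →ₗ[ℝ] X} {B : U →ₗ[ℝ] X} {C : X →ₗ[ℝ] Y}
    {D : U →ₗ[ℝ] Y} {Vstar V : Submodule ℝ X} (hV : IsSelfBounded A B C D Vstar V)
    (hVstar : IsMaxOutputNulling A B C D Vstar) {x : X} (hx : x ∈ V) {u : U}
    (hu : A x + B u ∈ Vstar) (hCu : C x + D u = 0) : A x + B u ∈ V := by
  obtain ⟨u₀, hu₀, hCu₀⟩ := hV.1 x hx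
  have hker : u - u₀ ∈ LinearMap.ker D := by
    rw [LinearMap.mem_ker, map_sub, ← add_sub_add_left_eq_sub _ _ (C x), hCu, hCu₀, sub_zero]
  have hdiff : B (u - u₀) ∈ V := by
    refine hV.2 ⟨?_, u - u₀, hker, rfl⟩
    rw [map_sub, ← add_sub_add_left_eq_sub _ _ (A x)]
    exact sub_mem hu (hVstar.2 V hV.1 hu₀)
  simpa using V.add_mem hu₀ hdiff

/-- A disturbance `w` keeping both outputs at zero is the admissible input `(0, w)` of the
extended system, so `S* ∩ V` is input containing. -/
theorem IsMinInputContaining.le_of_isSelfBounded {A : X →ₗ[ℝ] X} {B : U →ₗ[ℝ] X}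
    {H : W →ₗ[ℝ] X} {C : X →ₗ[ℝ] Y} {E : X →ₗ[ℝ] Z} {Dz : U →ₗ[ℝ] Z} {Gy : W →ₗ[ℝ] Y}
    {Gz : W →ₗ[ℝ] Z} {Sstar Vstar V : Submodule ℝ X}
    (hSstar : IsMinInputContaining A H (C.prod E) (Gy.prod Gz) Sstar)
    (hVstar : IsMaxOutputNulling A (B.coprod H) E (Dz.coprod Gz) Vstar)
    (hV : IsSelfBounded A (B.coprod H) E (Dz.coprod Gz) Vstar V) (hle : Sstar ≤ Vstar) :
    Sstar ≤ V := by
  refine (hSstar.2 (Sstar ⊓ V) fun x hx w hw => ?_).trans inf_le_right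
  have hnext : A x + H w ∈ Sstar := hSstar.1 x hx.1 w hw
  refine ⟨hnext, ?_⟩
  simpa using hV.add_mem hVstar hx.2 (u := (0, w)) (by simpa using hle hnext)
    (by simpa using congrArg Prod.snd hw)

end LinearMaps

theorem quotSpec_sup_eq_quotSpec_inf {n : ℕ} (M N : Matrix (Fin n) (Fin n) ℝ)
    {S V : Submodule ℝ (Fin n → ℝ)} (hV : ∀ x ∈ V, M *ᵥ x ∈ V) (hS : ∀ x ∈ S, N *ᵥ x ∈ S)
    (hMN : ∀ x ∈ S, M *ᵥ x - N *ᵥ x ∈ V) :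
    quotSpec M V (S ⊔ V) = quotSpec N (S ⊓ V) S := by
  have hSV : ∀ x ∈ S ⊔ V, M *ᵥ x ∈ S ⊔ V := by
    intro x hx
    obtain ⟨s, hs, v, hv, rfl⟩ := mem_sup.mp hx
    have : M *ᵥ (s + v) = N *ᵥ s + ((M *ᵥ s - N *ᵥ s) + M *ᵥ v) := by rw [mulVec_add]; abel
    rw [this]
    exact add_mem (mem_sup_left (hS s hs)) (mem_sup_right (add_mem (hMN s hs) (hV v hv)))
  have hSV' : ∀ x ∈ S ⊓ V, N *ᵥ x ∈ S ⊓ V := fun x hx =>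
    ⟨hS x hx.1, by simpa using sub_mem (hV x hx.2) (hMN x hx.1)⟩
  rw [quotSpec, quotSpec, dif_pos ⟨le_sup_right, hV, hSV⟩, dif_pos ⟨inf_le_left, hSV', hS⟩]
  refine congrArg (fun p => (Polynomial.map (algebraMap ℝ ℂ) p).roots) ?_
  let e := (quotEquivOfEq _ _ (comap_inf S V S.subtype)).trans
    (LinearMap.quotientInfEquivSupQuotient S V)
  rw [← e.charpoly_conj]
  congr 1
  refine LinearMap.ext fun y => ?_
  obtain ⟨z, rfl⟩ := e.surjective y
  obtain ⟨x, rfl⟩ := Submodule.Quotient.mk_surjective _ z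
  rw [LinearEquiv.conj_apply_apply, e.symm_apply_apply]
  exact (Submodule.Quotient.eq _).2 (hMN x x.2)

section Friends

variable {n m q p r : ℕ} {A : Matrix (Fin n) (Fin n) ℝ} {B : Matrix (Fin n) (Fin m) ℝ}
  {H : Matrix (Fin n) (Fin q) ℝ} {C : Matrix (Fin p) (Fin n) ℝ}
  {Gy : Matrix (Fin p) (Fin q) ℝ} {E : Matrix (Fin r) (Fin n) ℝ}
  {Dz : Matrix (Fin r) (Fin m) ℝ} {Gz : Matrix (Fin r) (Fin q) ℝ}
  {F : Matrix (Fin m) (Fin n) ℝ} {G : Matrix (Fin n) (Fin p) ℝ}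

theorem IsONFriend.isOutputNulling {V : Submodule ℝ (Fin n → ℝ)} (hF : IsONFriend A B E Dz V F) :
    IsOutputNulling A.mulVecLin B.mulVecLin E.mulVecLin Dz.mulVecLin V := fun v hv =>
  ⟨F *ᵥ v, by simpa [add_mulVec, mulVec_mulVec] using hF.1 v hv,
    by simpa [add_mulVec, mulVec_mulVec] using hF.2 v hv⟩

theorem IsONFriend.mulVec_mem_of_isSelfBounded {Vstar V W : Submodule ℝ (Fin n → ℝ)}
    (hVstar : IsMaxOutputNulling A.mulVecLin (B.mulVecLin.coprod H.mulVecLin) E.mulVecLin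
      (Dz.mulVecLin.coprod Gz.mulVecLin) Vstar)
    (hV : IsSelfBounded A.mulVecLin (B.mulVecLin.coprod H.mulVecLin) E.mulVecLin
      (Dz.mulVecLin.coprod Gz.mulVecLin) Vstar V)
    (hF : IsONFriend A B E Dz W F) (hVW : V ≤ W) : ∀ x ∈ V, (A + B * F) *ᵥ x ∈ V := by
  intro x hx
  have hWle : W ≤ Vstar := hVstar.2 W (hF.isOutputNulling.coprod _ _)
  simpa [add_mulVec, mulVec_mulVec] using hV.add_mem hVstar hx (u := (F *ᵥ x, 0))
    (by simpa [add_mulVec, mulVec_mulVec] using hWle (hF.1 x (hVW hx)))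
    (by simpa [add_mulVec, mulVec_mulVec] using hF.2 x (hVW hx))

theorem IsICFriend.mulVec_mem_of_le_sup {S₀ S : Submodule ℝ (Fin n → ℝ)}
    (hG : IsICFriend A H C Gy S₀ G)
    (hS : IsInputContaining A.mulVecLin H.mulVecLin C.mulVecLin Gy.mulVecLin S)
    (hS₀ : S₀ ≤ S) (hdec : S ≤ S₀ ⊔ (LinearMap.range Gy.mulVecLin).comap C.mulVecLin) :
    ∀ x ∈ S, (A + G * C) *ᵥ x ∈ S := by
  intro x hx
  obtain ⟨s, hs, c, ⟨w, hw⟩, rfl⟩ := mem_sup.mp (hdec hx)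
  replace hw : Gy *ᵥ w = C *ᵥ c := hw
  have hc : c ∈ S := by simpa using S.sub_mem hx (hS₀ hs)
  have hAc : A *ᵥ c + H *ᵥ (-w) ∈ S := hS c hc (-w) (by simp [mulVec_neg, hw])
  have hGc : (A + G * C) *ᵥ c = (A *ᵥ c + H *ᵥ (-w)) + (H + G * Gy) *ᵥ w := by
    simp only [add_mulVec, ← mulVec_mulVec, hw, mulVec_neg]
    abel
  rw [mulVec_add, hGc]
  exact add_mem (hS₀ (hG.1 s hs)) (add_mem hAc (hS₀ (hG.2 ⟨w, rfl⟩)))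

theorem IsONFriend.mulVec_sub_mulVec_mem_of_mulVec_eq {Vstar V S : Submodule ℝ (Fin n → ℝ)}
    (hVstar : IsMaxOutputNulling A.mulVecLin (B.mulVecLin.coprod H.mulVecLin) E.mulVecLin
      (Dz.mulVecLin.coprod Gz.mulVecLin) Vstar)
    (hV : IsSelfBounded A.mulVecLin (B.mulVecLin.coprod H.mulVecLin) E.mulVecLin
      (Dz.mulVecLin.coprod Gz.mulVecLin) Vstar V)
    (hS : IsInputContaining A.mulVecLin H.mulVecLin C.mulVecLin Gy.mulVecLin S)
    (hF : IsONFriend A B E Dz (S ⊔ V) F) (hHG : LinearMap.range (H + G * Gy).mulVecLin ≤ V)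
    {c : Fin n → ℝ} (hc : c ∈ S) {w : Fin q → ℝ} (hCw : Gy *ᵥ w = C *ᵥ c)
    (hEw : Gz *ᵥ w = E *ᵥ c) : (A + B * F) *ᵥ c - (A + G * C) *ᵥ c ∈ V := by
  have hSVle : S ⊔ V ≤ Vstar := hVstar.2 _ (hF.isOutputNulling.coprod _ _)
  have hcSV : c ∈ S ⊔ V := mem_sup_left hc
  have hAc : A *ᵥ c + H *ᵥ (-w) ∈ S := hS c hc (-w) (by simp [mulVec_neg, hCw])
  have hBH : B *ᵥ (F *ᵥ c) + H *ᵥ w ∈ V := by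
    refine hV.2 ⟨?_, (F *ᵥ c, w), ?_, by simp⟩
    · have hsplit : B *ᵥ (F *ᵥ c) + H *ᵥ w = (A + B * F) *ᵥ c - (A *ᵥ c + H *ᵥ (-w)) := by
        simp only [add_mulVec, mulVec_mulVec, mulVec_neg]
        abel
      rw [hsplit]
      exact hSVle (sub_mem (hF.1 c hcSV) (mem_sup_left hAc))
    · simpa [add_mulVec, mulVec_mulVec, hEw, add_comm] using hF.2 c hcSV
  have hsplit : (A + B * F) *ᵥ c - (A + G * C) *ᵥ c
      = (B *ᵥ (F *ᵥ c) + H *ᵥ w) - (H + G * Gy) *ᵥ w := by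
    simp only [add_mulVec, ← mulVec_mulVec, hCw]
    abel
  rw [hsplit]
  exact sub_mem hBH (hHG ⟨w, rfl⟩)

theorem IsONFriend.mulVec_sub_mulVec_mem {Vstar V S₀ S : Submodule ℝ (Fin n → ℝ)}
    (hVstar : IsMaxOutputNulling A.mulVecLin (B.mulVecLin.coprod H.mulVecLin) E.mulVecLin
      (Dz.mulVecLin.coprod Gz.mulVecLin) Vstar)
    (hV : IsSelfBounded A.mulVecLin (B.mulVecLin.coprod H.mulVecLin) E.mulVecLin
      (Dz.mulVecLin.coprod Gz.mulVecLin) Vstar V)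
    (hS : IsInputContaining A.mulVecLin H.mulVecLin C.mulVecLin Gy.mulVecLin S)
    (hF : IsONFriend A B E Dz (S ⊔ V) F) (hG : IsICFriend A H C Gy S₀ G)
    (hS₀V : S₀ ≤ V) (hS₀S : S₀ ≤ S)
    (hdec : S ≤ S₀ ⊔ (LinearMap.range (Gy.mulVecLin.prod Gz.mulVecLin)).comap
      (C.mulVecLin.prod E.mulVecLin)) :
    ∀ x ∈ S, (A + B * F) *ᵥ x - (A + G * C) *ᵥ x ∈ V := by
  intro x hx
  obtain ⟨s, hs, c, ⟨w, hw⟩, rfl⟩ := mem_sup.mp (hdec hx)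
  have hc : c ∈ S := by simpa using S.sub_mem hx (hS₀S hs)
  have hs' : (A + B * F) *ᵥ s - (A + G * C) *ᵥ s ∈ V :=
    sub_mem (hF.mulVec_mem_of_isSelfBounded hVstar hV le_sup_right s (hS₀V hs))
      (hS₀V (hG.1 s hs))
  have hc' := hF.mulVec_sub_mulVec_mem_of_mulVec_eq hVstar hV hS (hG.2.trans hS₀V) hc
    (congrArg Prod.fst hw) (congrArg Prod.snd hw)
  rw [mulVec_add, mulVec_add, add_sub_add_comm]
  exact add_mem hs' hc'

end Friends

theorem stmt10_general {n m q p r : ℕ}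
    (A : Matrix (Fin n) (Fin n) ℝ) (B : Matrix (Fin n) (Fin m) ℝ)
    (H : Matrix (Fin n) (Fin q) ℝ) (C : Matrix (Fin p) (Fin n) ℝ)
    (Gy : Matrix (Fin p) (Fin q) ℝ)
    (E : Matrix (Fin r) (Fin n) ℝ) (Dz : Matrix (Fin r) (Fin m) ℝ)
    (Gz : Matrix (Fin r) (Fin q) ℝ)
    (Vstar1 : Submodule ℝ (Fin n → ℝ))
    (hVstar1 : IsMaxOutputNulling A.mulVecLin (B.mulVecLin.coprod H.mulVecLin) E.mulVecLin
      (Dz.mulVecLin.coprod Gz.mulVecLin) Vstar1)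
    (Vm : Submodule ℝ (Fin n → ℝ))
    (hVm : IsMinSelfBounded A.mulVecLin (B.mulVecLin.coprod H.mulVecLin) E.mulVecLin
      (Dz.mulVecLin.coprod Gz.mulVecLin) Vstar1 Vm)
    (Sstar2 : Submodule ℝ (Fin n → ℝ))
    (hSstar2 : IsMinInputContaining A.mulVecLin H.mulVecLin (C.mulVecLin.prod E.mulVecLin)
      (Gy.mulVecLin.prod Gz.mulVecLin) Sstar2)
    (SM : Submodule ℝ (Fin n → ℝ))
    (hSM : IsMaxSelfHidden A.mulVecLin H.mulVecLin (C.mulVecLin.prod E.mulVecLin)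
      (Gy.mulVecLin.prod Gz.mulVecLin) Sstar2 SM)
    (S : Submodule ℝ (Fin n → ℝ))
    (hS : IsInputContaining A.mulVecLin H.mulVecLin C.mulVecLin Gy.mulVecLin S)
    (hS1 : Vm ⊓ SM ≤ S) (hS2 : S ≤ SM)
    (F : Matrix (Fin m) (Fin n) ℝ) (G : Matrix (Fin n) (Fin p) ℝ)
    (hF : IsONFriend A B E Dz (S ⊔ Vm) F) (hG : IsICFriend A H C Gy (Vm ⊓ SM) G) :
    (∀ x ∈ Vm, (A + B * F).mulVec x ∈ Vm) ∧
    (∀ x ∈ S, (A + G * C).mulVec x ∈ S) ∧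
    quotSpec (A + B * F) Vm (S ⊔ Vm) = quotSpec (A + G * C) (Vm ⊓ SM) S := by
  have hSVm : S ⊔ Vm ≤ Vstar1 := hVstar1.2 _ (hF.isOutputNulling.coprod _ _)
  have hSstar2S : Sstar2 ≤ S := hSstar2.2 S (hS.prod _ _)
  have hSstar2Vm : Sstar2 ≤ Vm :=
    hSstar2.le_of_isSelfBounded hVstar1 hVm.1 (hSstar2S.trans (le_sup_left.trans hSVm))
  have hdec : S ≤ Vm ⊓ SM ⊔ (LinearMap.range (Gy.mulVecLin.prod Gz.mulVecLin)).comap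
      (C.mulVecLin.prod E.mulVecLin) :=
    hS2.trans (hSM.1.2.trans (sup_le_sup_right (le_inf hSstar2Vm (hSstar2S.trans hS2)) _))
  have hVmInv := hF.mulVec_mem_of_isSelfBounded hVstar1 hVm.1 le_sup_right
  have hSInv :=
    hG.mulVec_mem_of_le_sup hS hS1 (hdec.trans (sup_le_sup_left comap_range_prod_le _))
  have hinf : Vm ⊓ SM = S ⊓ Vm :=
    le_antisymm (le_inf hS1 inf_le_left) fun x hx => ⟨hx.2, hS2 hx.1⟩
  refine ⟨hVmInv, hSInv, ?_⟩
  rw [hinf]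
  exact quotSpec_sup_eq_quotSpec_inf _ _ hVmInv hSInv
    (hF.mulVec_sub_mulVec_mem hVstar1 hVm.1 hS hG inf_le_left hS1 hdec)

theorem stmt10 {n m q p r : ℕ}
    (A : Matrix (Fin n) (Fin n) ℝ) (B : Matrix (Fin n) (Fin m) ℝ)
    (H : Matrix (Fin n) (Fin q) ℝ) (C : Matrix (Fin p) (Fin n) ℝ)
    (Gy : Matrix (Fin p) (Fin q) ℝ)
    (E : Matrix (Fin r) (Fin n) ℝ) (Dz : Matrix (Fin r) (Fin m) ℝ)
    (Gz : Matrix (Fin r) (Fin q) ℝ)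
    (Vstar : Submodule ℝ (Fin n → ℝ))
    (hVstar : IsMaxOutputNulling A.mulVecLin B.mulVecLin E.mulVecLin Dz.mulVecLin Vstar)
    (Sstar : Submodule ℝ (Fin n → ℝ))
    (hSstar : IsMinInputContaining A.mulVecLin H.mulVecLin C.mulVecLin Gy.mulVecLin Sstar)
    (Vstar1 : Submodule ℝ (Fin n → ℝ))
    (hVstar1 : IsMaxOutputNulling A.mulVecLin (B.mulVecLin.coprod H.mulVecLin) E.mulVecLin
      (Dz.mulVecLin.coprod Gz.mulVecLin) Vstar1)
    (Vm : Submodule ℝ (Fin n → ℝ))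
    (hVm : IsMinSelfBounded A.mulVecLin (B.mulVecLin.coprod H.mulVecLin) E.mulVecLin
      (Dz.mulVecLin.coprod Gz.mulVecLin) Vstar1 Vm)
    (Sstar2 : Submodule ℝ (Fin n → ℝ))
    (hSstar2 : IsMinInputContaining A.mulVecLin H.mulVecLin (C.mulVecLin.prod E.mulVecLin)
      (Gy.mulVecLin.prod Gz.mulVecLin) Sstar2)
    (SM : Submodule ℝ (Fin n → ℝ))
    (hSM : IsMaxSelfHidden A.mulVecLin H.mulVecLin (C.mulVecLin.prod E.mulVecLin)
      (Gy.mulVecLin.prod Gz.mulVecLin) Sstar2 SM)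
    (hα : CondAlpha B H Dz Gz Vstar)
    (hβ : CondBeta C Gy E Gz Sstar)
    (hSV : Sstar ≤ Vstar)
    (S : Submodule ℝ (Fin n → ℝ))
    (hS : IsInputContaining A.mulVecLin H.mulVecLin C.mulVecLin Gy.mulVecLin S)
    (hS1 : Vm ⊓ SM ≤ S) (hS2 : S ≤ SM)
    (F : Matrix (Fin m) (Fin n) ℝ) (G : Matrix (Fin n) (Fin p) ℝ)
    (hF : IsONFriend A B E Dz (S ⊔ Vm) F) (hG : IsICFriend A H C Gy (Vm ⊓ SM) G) :
    (∀ x ∈ Vm, (A + B * F).mulVec x ∈ Vm) ∧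
    (∀ x ∈ S, (A + G * C).mulVec x ∈ S) ∧
    quotSpec (A + B * F) Vm (S ⊔ Vm) = quotSpec (A + G * C) (Vm ⊓ SM) S :=
  stmt10_general A B H C Gy E Dz Gz Vstar1 hVstar1 Vm hVm Sstar2 hSstar2 SM hSM S hS hS1 hS2 F G hF
    hG
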